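/- arXiv:2303.00067 — 3 statements merged into one kernel-verified Lean document; each statement's English description precedes it below -/
import Mathlib

section
/- For a finite set β of n Boolean-valued functions on a finite state set, and any state q, the cardinality of R_{a,q}(β) is at most min(2^n, |[q]_{∼_a}|); hence log|R_{a,q}(β)| ≤ min(n, log|St|). -/
/-- Joint indistinguishability relation `∼^β_a`. -/
def jointRel {St ι : Type} (r : St → St → Prop) (v : ι → St → Bool) (x y : St) : Prop :=
  r x y ∧ ∀ i, v i x = v i y

/-- `R_{a,q}(β)`: the set of `∼^β_a`-classes contained in the epistemic neighbourhood of `q`. -/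
def Rclasses {St ι : Type} (r : St → St → Prop) (v : ι → St → Bool) (q : St) : Set (Set St) :=
  {C | ∃ q', r q' q ∧ C = {x | jointRel r v x q'}}

lemma Rclasses_eq_image {St ι : Type} (r : St → St → Prop) (v : ι → St → Bool) (q : St) :
    Rclasses r v q = (fun q' => {x | jointRel r v x q'}) '' {q' | r q' q} := by
  ext C
  simp [Rclasses, Set.mem_image, eq_comm]

/-- `|R_{a,q}(β)| ≤ min(2^n, |[q]_{∼_a}|)`, hence
`log₂|R_{a,q}(β)| ≤ min(n, log₂|St|)`. -/
theorem stmt_4 {St : Type} [Finite St] (n : ℕ) (r : St → St → Prop) (hr : Equivalence r)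
    (v : Fin n → St → Bool) (q : St) :
    (Rclasses r v q).ncard ≤ min (2 ^ n) (({q' | r q' q} : Set St).ncard) ∧
    Real.logb 2 ((Rclasses r v q).ncard) ≤ min (n : ℝ) (Real.logb 2 (Nat.card St)) := by
  have hfin : ({q' | r q' q} : Set St).Finite := Set.toFinite _
  have h2 : (Rclasses r v q).ncard ≤ ({q' | r q' q} : Set St).ncard := by
    rw [Rclasses_eq_image]
    exact Set.ncard_image_le hfin
  have h1 : (Rclasses r v q).ncard ≤ 2 ^ n := by
    -- inject classes into Fin n → Bool
    classical
    have : ∃ f : Set St → (Fin n → Bool), Set.InjOn f (Rclasses r v q) := by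
      refine ⟨fun C => if h : ∃ q', C = {x | jointRel r v x q'} then
        fun i => v i h.choose else fun _ => false, ?_⟩
      rintro C₁ ⟨q₁, hq₁, rfl⟩ C₂ ⟨q₂, hq₂, rfl⟩ heq
      have h₁ : ∃ q', ({x | jointRel r v x q₁} : Set St) = {x | jointRel r v x q'} := ⟨q₁, rfl⟩
      have h₂ : ∃ q', ({x | jointRel r v x q₂} : Set St) = {x | jointRel r v x q'} := ⟨q₂, rfl⟩
      simp only [dif_pos h₁, dif_pos h₂] at heq
      -- q₁ is jointRel-related to h₁.choose, etc.
      have m₁ : q₁ ∈ ({x | jointRel r v x h₁.choose} : Set St) := by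
        rw [← h₁.choose_spec]; exact ⟨hr.refl q₁, fun i => rfl⟩
      have m₂ : q₂ ∈ ({x | jointRel r v x h₂.choose} : Set St) := by
        rw [← h₂.choose_spec]; exact ⟨hr.refl q₂, fun i => rfl⟩
      have hv : ∀ i, v i q₁ = v i q₂ := by
        intro i
        have := congrFun heq i
        rw [m₁.2 i, m₂.2 i, this]
      have hrel : jointRel r v q₁ q₂ := ⟨hr.trans hq₁ (hr.symm hq₂), hv⟩
      ext x
      constructor
      · rintro ⟨hx, hxv⟩
        exact ⟨hr.trans hx hrel.1, fun i => (hxv i).trans (hv i)⟩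
      · rintro ⟨hx, hxv⟩
        exact ⟨hr.trans hx (hr.symm hrel.1), fun i => (hxv i).trans (hv i).symm⟩
    obtain ⟨f, hf⟩ := this
    calc (Rclasses r v q).ncard = (f '' Rclasses r v q).ncard :=
          (Set.ncard_image_of_injOn hf).symm
      _ ≤ Nat.card (Fin n → Bool) := by
          have := Set.ncard_le_ncard (Set.subset_univ (f '' Rclasses r v q)) Set.finite_univ
          simpa [Set.ncard_univ] using this
      _ = 2 ^ n := by simp [Nat.card_eq_fintype_card]
  refine ⟨le_min h1 h2, ?_⟩
  have hSt : (Rclasses r v q).ncard ≤ Nat.card St := by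
    refine h2.trans ?_
    have := Set.ncard_le_ncard (Set.subset_univ ({q' | r q' q} : Set St)) Set.finite_univ
    simpa [Set.ncard_univ] using this
  set m := (Rclasses r v q).ncard with hm
  rcases Nat.eq_zero_or_pos m with h0 | hpos
  · rw [h0]
    simp only [Nat.cast_zero, Real.logb_zero]
    refine le_min ?_ ?_
    · exact_mod_cast Nat.zero_le n
    · rcases Nat.eq_zero_or_pos (Nat.card St) with hs | hs
      · simp [hs]
      · exact Real.logb_nonneg one_lt_two (by exact_mod_cast hs)
  · have hmpos : (0:ℝ) < m := by exact_mod_cast hpos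
    refine le_min ?_ ?_
    · have : (m:ℝ) ≤ 2 ^ n := by exact_mod_cast h1
      calc Real.logb 2 m ≤ Real.logb 2 (2 ^ n) :=
            Real.logb_le_logb_of_le one_lt_two hmpos this
        _ = n := by
            rw [Real.logb, Real.log_pow, mul_div_assoc,
              div_self (Real.log_pos one_lt_two).ne', mul_one]
    · exact Real.logb_le_logb_of_le one_lt_two hmpos (by exact_mod_cast hSt)
end

section
/- The Hartley uncertainty of an agent a about a single Boolean-valued function φ at state q equals 0 (i.e., |R_{a,q}({φ})| = 1) and φ holds at q, if and only if φ holds at every state a-indistinguishable from q. This establishes K_a φ ↔ (φ ∧ H_a^{=0}{φ}). -/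
/-- `R_{c,q}({φ})`: classes, within `[q]_{∼_a}`, of the relation
"indistinguishable by `a` and agreeing on `φ`". -/
def Rsingle {St : Type} (r : St → St → Prop) (φ : St → Bool) (q : St) : Set (Set St) :=
  {C | ∃ q', r q' q ∧ C = {x | r x q' ∧ φ x = φ q'}}

/-- `K_a φ ↔ (φ ∧ H_a^{=0}{φ})`: the agent knows `φ` at `q` iff `φ` holds at `q`
and the Hartley uncertainty about `{φ}` is zero, i.e. `|R_{a,q}({φ})| = 1`. -/
theorem stmt_5 {St : Type} (r : St → St → Prop) (hr : Equivalence r) (φ : St → Bool) (q : St) :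
    (∀ q', r q' q → φ q' = true) ↔ (φ q = true ∧ (Rsingle r φ q).ncard = 1) := by
  constructor
  · intro h
    have hq : φ q = true := h q (hr.refl q)
    refine ⟨hq, ?_⟩
    rw [Set.ncard_eq_one]
    refine ⟨{x | r x q ∧ φ x = φ q}, ?_⟩
    ext C
    constructor
    · rintro ⟨q', hq', rfl⟩
      have hφ' : φ q' = φ q := by rw [h q' hq', hq]
      simp only [Set.mem_singleton_iff]
      ext x
      simp only [Set.mem_setOf_eq, hφ']
      constructor
      · rintro ⟨hx, hxe⟩; exact ⟨hr.trans hx hq', hxe⟩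
      · rintro ⟨hx, hxe⟩; exact ⟨hr.trans hx (hr.symm hq'), hxe⟩
    · rintro rfl
      exact ⟨q, hr.refl q, rfl⟩
  · rintro ⟨hq, hcard⟩ q' hq'
    by_contra hne
    have hfalse : φ q' = false := by
      cases hx : φ q' <;> simp_all
    obtain ⟨C, hC⟩ := Set.ncard_eq_one.mp hcard
    have h1 : ({x | r x q ∧ φ x = φ q} : Set St) ∈ Rsingle r φ q := ⟨q, hr.refl q, rfl⟩
    have h2 : ({x | r x q' ∧ φ x = φ q'} : Set St) ∈ Rsingle r φ q := ⟨q', hq', rfl⟩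
    rw [hC, Set.mem_singleton_iff] at h1 h2
    have hmem : q ∈ ({x | r x q ∧ φ x = φ q} : Set St) := ⟨hr.refl q, rfl⟩
    rw [h1, ← h2] at hmem
    obtain ⟨_, he⟩ := hmem
    rw [hq, hfalse] at he
    exact Bool.true_eq_false.mp he
end

section
/- For any state q, agent a, and set β of n Boolean-valued functions, and any 1 ≤ m ≤ 2^n: |R_{a,q}(β)| = m if and only if there exists a subset S of the 2^n minterms with |S| = m such that every minterm in S has nonempty restriction to [q]_{∼_a} and every minterm outside S has empty restriction to [q]_{∼_a}. (This is the core of the translation of H_a^{=log m}β into a Boolean combination of epistemic formulas.) -/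
/-- The minterm `α_t` for a valuation pattern `t : Fin n → Bool`. -/
def minterm {St : Type} {n : ℕ} (v : Fin n → St → Bool) (t : Fin n → Bool) (q : St) : Bool :=
  decide (∀ i, v i q = t i)

/-- `[ψ]^q_a = {q' ∈ [q]_{∼_a} : ψ q' = true}`. -/
def restr {St : Type} (r : St → St → Prop) (ψ : St → Bool) (q : St) : Set St :=
  {q' | r q' q ∧ ψ q' = true}

/-- for `1 ≤ m ≤ 2^n`, `|R_{a,q}(β)| = m` iff there is a set `S` of exactly `m`
minterms such that precisely the minterms in `S` have a nonempty restriction to `[q]_{∼_a}`. -/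
theorem stmt_8 {St : Type} (n : ℕ) (r : St → St → Prop) (hr : Equivalence r)
    (v : Fin n → St → Bool) (q : St) (m : ℕ) (hm1 : 1 ≤ m) (hm2 : m ≤ 2 ^ n) :
    (Rclasses r v q).ncard = m ↔
      ∃ S : Finset (Fin n → Bool), S.card = m ∧
        (∀ t ∈ S, (restr r (minterm v t) q).Nonempty) ∧
        (∀ t ∉ S, restr r (minterm v t) q = ∅) := by
  classical
  set f : (Fin n → Bool) → Set St := fun t => restr r (minterm v t) q with hf
  have hrestr : ∀ t, f t = {x | r x q ∧ ∀ i, v i x = t i} := by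
    intro t
    ext x
    simp [hf, restr, minterm]
  set T : Finset (Fin n → Bool) := Finset.univ.filter (fun t => (f t).Nonempty) with hT
  -- Rclasses equals image of T under f
  have himg : Rclasses r v q = f '' ↑T := by
    ext C
    constructor
    · rintro ⟨q', hq', rfl⟩
      refine ⟨fun i => v i q', ?_, ?_⟩
      · simp only [hT, Finset.coe_filter, Set.mem_setOf_eq, Finset.mem_univ, true_and]
        exact ⟨q', by rw [hrestr]; exact ⟨hq', fun i => rfl⟩⟩
      · rw [hrestr]
        ext x
        simp only [Set.mem_setOf_eq, jointRel]
        constructor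
        · rintro ⟨h1, h2⟩; exact ⟨hr.trans h1 (hr.symm hq'), h2⟩
        · rintro ⟨h1, h2⟩; exact ⟨hr.trans h1 hq', h2⟩
    · rintro ⟨t, ht, rfl⟩
      simp only [hT, Finset.coe_filter, Set.mem_setOf_eq, Finset.mem_univ, true_and] at ht
      obtain ⟨q', hq'⟩ := ht
      rw [hrestr] at hq'
      refine ⟨q', hq'.1, ?_⟩
      rw [hrestr]
      ext x
      simp only [Set.mem_setOf_eq, jointRel]
      constructor
      · rintro ⟨h1, h2⟩
        exact ⟨hr.trans h1 (hr.symm hq'.1), fun i => by rw [h2 i, hq'.2 i]⟩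
      · rintro ⟨h1, h2⟩
        exact ⟨hr.trans h1 hq'.1, fun i => by rw [h2 i, hq'.2 i]⟩
  have hinj : Set.InjOn f ↑T := by
    intro t ht t' ht' heq
    simp only [hT, Finset.coe_filter, Set.mem_setOf_eq, Finset.mem_univ, true_and] at ht
    obtain ⟨x, hx⟩ := ht
    have hx' : x ∈ f t' := heq ▸ hx
    rw [hrestr] at hx hx'
    funext i
    rw [← hx.2 i, hx'.2 i]
  have hcard : (Rclasses r v q).ncard = T.card := by
    rw [himg, Set.ncard_image_of_injOn hinj, Set.ncard_coe_finset]
  constructor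
  · intro h
    refine ⟨T, by rw [← hcard, h], ?_, ?_⟩
    · intro t ht
      simpa [hT] using ht
    · intro t ht
      simp only [hT, Finset.mem_filter, Finset.mem_univ, true_and] at ht
      exact Set.not_nonempty_iff_eq_empty.mp ht
  · rintro ⟨S, hScard, hS1, hS2⟩
    have : S = T := by
      ext t
      simp only [hT, Finset.mem_filter, Finset.mem_univ, true_and]
      constructor
      · exact fun h => hS1 t h
      · intro h
        by_contra hc
        have h' : (restr r (minterm v t) q).Nonempty := h
        rw [hS2 t hc] at h'
        exact Set.not_nonempty_empty h'
    rw [hcard, ← this, hScard]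
end
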